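/- Let n ∈ ℕ_0, λ > 0, x ∈ ℝ, and R > |x|. Then H_n(x) = (2^n n!/(λ)_n) · Σ_{s=0}^{⌊n/2⌋} (−1)^s ( (n+λ−2s)_{2s} / (4^s s!) ) · (1/(2πi)) ∮_{|y|=R} y^{n−2s−1} (1 − x/y)^{−λ} dy, where the contour is the circle of radius R centered at 0 traversed once counterclockwise and (1 − x/y)^{−λ} is the principal branch complex power (well-defined since |x/y| < 1 on the contour). -/

import Mathlib

open Complex Metric Filter Topology NNReal

lemma aux_slit {u : ℂ} (hu : ‖u‖ < 1) : 1 - u ∈ Complex.slitPlane := by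
  simpa [sub_eq_add_neg] using Complex.mem_slitPlane_of_norm_lt_one (z := -u) (by simpa)

lemma aux_cast (lam : ℝ) (k : ℕ) :
    (ascPochhammer ℂ k).eval ((lam : ℂ)) = (((ascPochhammer ℝ k).eval lam : ℝ) : ℂ) := by
  induction k with
  | zero => simp
  | succ k ih => rw [ascPochhammer_succ_eval, ascPochhammer_succ_eval, ih]; push_cast; ring

lemma aux_iteratedDeriv (x : ℝ) (lam : ℝ) (k : ℕ) :
    ∀ w : ℂ, ‖(x:ℂ) * w‖ < 1 →
      iteratedDeriv k (fun w : ℂ => (1 - (x:ℂ) * w) ^ (-(lam:ℂ))) w =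
        ((ascPochhammer ℂ k).eval (lam:ℂ)) * (x:ℂ)^k * (1 - (x:ℂ)*w) ^ (-(lam:ℂ) - k) := by
  induction k with
  | zero => intro w hw; simp
  | succ k ih =>
    intro w hw
    rw [iteratedDeriv_succ]
    have hopen : IsOpen {w : ℂ | ‖(x:ℂ) * w‖ < 1} :=
      isOpen_lt (by continuity) continuous_const
    have hev : iteratedDeriv k (fun w : ℂ => (1 - (x:ℂ) * w) ^ (-(lam:ℂ)))
        =ᶠ[nhds w] fun v => ((ascPochhammer ℂ k).eval (lam:ℂ)) * (x:ℂ)^k *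
          (1 - (x:ℂ)*v) ^ (-(lam:ℂ) - k) := by
      filter_upwards [hopen.mem_nhds hw] with v hv using ih v hv
    rw [hev.deriv_eq]
    have hd : HasDerivAt (fun w : ℂ => (1 - (x:ℂ)*w)) (-(x:ℂ)) w := by
      simpa using ((hasDerivAt_id w).const_mul (x:ℂ)).const_sub 1
    have hw' : (1 - (x:ℂ)*w) ∈ Complex.slitPlane := aux_slit hw
    have hD := ((hd.cpow_const (c := -(lam:ℂ) - k) hw').const_mul
      (((ascPochhammer ℂ k).eval (lam:ℂ)) * (x:ℂ)^k)).deriv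
    rw [hD, ascPochhammer_succ_eval]
    have he : (-(lam:ℂ) - k - 1) = -(lam:ℂ) - (k+1 : ℕ) := by push_cast; ring
    rw [he]
    push_cast
    ring

lemma aux_summable (lam : ℝ) (hlam : 0 < lam) {q : ℝ} (hq0 : 0 ≤ q) (hq : q < 1) :
    Summable (fun k : ℕ => (ascPochhammer ℝ k).eval lam / (Nat.factorial k) * q ^ k) := by
  rcases eq_or_lt_of_le hq0 with h0 | h0
  · apply summable_of_ne_finset_zero (s := {0})
    intro k hk
    simp only [Finset.mem_singleton] at hk
    simp [← h0, zero_pow hk]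
  · have hne : ∀ k : ℕ, (ascPochhammer ℝ k).eval lam / (Nat.factorial k) * q ^ k ≠ 0 := by
      intro k
      have h1 := ascPochhammer_pos k lam hlam
      have h2 : (0:ℝ) < Nat.factorial k := by positivity
      positivity
    refine summable_of_ratio_test_tendsto_lt_one hq (Filter.Eventually.of_forall hne) ?_
    have hrat : ∀ k : ℕ, ‖(ascPochhammer ℝ (k+1)).eval lam / (Nat.factorial (k+1)) * q ^ (k+1)‖ /
        ‖(ascPochhammer ℝ k).eval lam / (Nat.factorial k) * q ^ k‖ =
        (1 + (lam - 1) * (1 / (k+1))) * q := by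
      intro k
      have h1 := ascPochhammer_pos k lam hlam
      have h1' := ascPochhammer_pos (k+1) lam hlam
      have h2 : (0:ℝ) < Nat.factorial k := by positivity
      have hq' : (0:ℝ) < q ^ k := by positivity
      rw [Real.norm_of_nonneg (by positivity), Real.norm_of_nonneg (by positivity),
        ascPochhammer_succ_eval, Nat.factorial_succ, pow_succ]
      have hk1 : ((k:ℝ) + 1) ≠ 0 := by positivity
      field_simp
      push_cast
      ring
    simp only [hrat]
    have h0t : Tendsto (fun k : ℕ => 1 + (lam - 1) * (1 / ((k:ℝ)+1))) atTop (𝓝 (1 + (lam-1) * 0)) :=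
      tendsto_const_nhds.add (tendsto_const_nhds.mul
        (by simpa using (tendsto_one_div_add_atTop_nhds_zero_nat :
          Tendsto (fun n : ℕ => 1 / ((n:ℝ) + 1)) atTop (𝓝 0))))
    have := h0t.mul_const q
    simpa using this

lemma aux_circle (x lam R : ℝ) (hlam : 0 < lam) (hR : |x| < R) (m : ℕ) :
    (∮ z in C(0, R), z ^ ((m:ℤ) - 1) * (1 - (x:ℂ) / z) ^ (-(lam:ℂ))) =
      (2 * Real.pi * Complex.I) *
        ((((ascPochhammer ℝ m).eval lam : ℝ) : ℂ) * (x:ℂ)^m / (Nat.factorial m)) := by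
  have hR0 : 0 < R := (abs_nonneg x).trans_lt hR
  set ρ : ℝ := 2 / (R + |x|) with hρdef
  have hRx : 0 < R + |x| := by positivity
  have hρ0 : 0 < ρ := by positivity
  have hball : ∀ w : ℂ, ‖w‖ ≤ ρ → ‖(x:ℂ) * w‖ < 1 := by
    intro w hw
    have h1 : ‖(x:ℂ) * w‖ = |x| * ‖w‖ := by
      rw [norm_mul, Complex.norm_real, Real.norm_eq_abs]
    rw [h1]
    calc |x| * ‖w‖ ≤ |x| * ρ := by
          exact mul_le_mul_of_nonneg_left hw (abs_nonneg x)
      _ < 1 := by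
          rw [hρdef, mul_div_assoc']
          rw [div_lt_one hRx]
          linarith [abs_nonneg x]
  set φ : ℂ → ℂ := fun w => (1 - (x:ℂ) * w) ^ (-(lam:ℂ)) with hφdef
  have hderiv : ∀ w : ℂ, ‖(x:ℂ) * w‖ < 1 → DifferentiableAt ℂ φ w := by
    intro w hw
    have hd : HasDerivAt (fun w : ℂ => (1 - (x:ℂ)*w)) (-(x:ℂ)) w := by
      simpa using ((hasDerivAt_id w).const_mul (x:ℂ)).const_sub 1
    exact (hd.cpow_const (aux_slit hw)).differentiableAt
  set ρ' : ℝ≥0 := ⟨ρ, hρ0.le⟩ with hρ'def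
  have hρ'0 : 0 < ρ' := hρ0
  have hdiff : DifferentiableOn ℂ φ (closedBall 0 (ρ' : ℝ)) := fun w hw =>
    (hderiv w (hball w (by have h : ‖w‖ ≤ (ρ' : ℝ) := (by simpa [dist_eq_norm] using hw); exact h))).differentiableWithinAt
  have hP := hdiff.hasFPowerSeriesOnBall hρ'0
  set p := cauchyPowerSeries φ 0 ρ' with hpdef
  have hcoeff : ∀ k, p.coeff k =
      (((ascPochhammer ℝ k).eval lam : ℝ) : ℂ) * (x:ℂ)^k / (Nat.factorial k) := by
    intro k
    have h1 := hP.factorial_smul (y := (1:ℂ)) k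
    rw [← iteratedDeriv_eq_iteratedFDeriv,
      aux_iteratedDeriv x lam k 0 (by simp)] at h1
    simp only [mul_zero, sub_zero, Complex.one_cpow, mul_one] at h1
    rw [aux_cast] at h1
    have h2 : (p k fun _ => (1:ℂ)) = p.coeff k := by
      simp [FormalMultilinearSeries.apply_eq_pow_smul_coeff]
    rw [h2, nsmul_eq_mul] at h1
    have h3 : ((Nat.factorial k : ℂ)) ≠ 0 := by
      exact_mod_cast Nat.cast_ne_zero.mpr (Nat.factorial_ne_zero k)
    field_simp
    rw [mul_comm] at h1
    exact h1
  -- pointwise facts on the circle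
  have hzprop : ∀ θ : ℝ, ‖circleMap 0 R θ‖ = R := by
    intro θ
    rw [norm_circleMap_zero, abs_of_pos hR0]
  have hz0 : ∀ θ : ℝ, circleMap 0 R θ ≠ 0 := fun θ => circleMap_ne_center hR0.ne'
  have hmem : ∀ θ : ℝ, (circleMap 0 R θ)⁻¹ ∈ Metric.eball (0:ℂ) ρ' := by
    intro θ
    rw [Metric.emetric_ball_nnreal, mem_ball_zero_iff, norm_inv, hzprop]
    rw [hρ'def]
    show R⁻¹ < ρ
    rw [hρdef, inv_eq_one_div, div_lt_div_iff₀ hR0 hRx]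
    linarith
  have hlim : ∀ θ : ℝ, HasSum
      (fun k : ℕ => deriv (circleMap 0 R) θ •
        ((circleMap 0 R θ) ^ ((m:ℤ) - 1 - k) * p.coeff k))
      (deriv (circleMap 0 R) θ •
        ((circleMap 0 R θ) ^ ((m:ℤ) - 1) * (1 - (x:ℂ) / circleMap 0 R θ) ^ (-(lam:ℂ)))) := by
    intro θ
    set z := circleMap 0 R θ with hzdef
    have hs := (hP.hasSum (y := z⁻¹) (hmem θ)).mul_left
      (deriv (circleMap 0 R) θ * z ^ ((m:ℤ) - 1))
    have hfun : ∀ k : ℕ, deriv (circleMap 0 R) θ • (z ^ ((m:ℤ) - 1 - k) * p.coeff k) =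
        deriv (circleMap 0 R) θ * z ^ ((m:ℤ) - 1) * (p k fun _ => z⁻¹) := by
      intro k
      rw [FormalMultilinearSeries.apply_eq_pow_smul_coeff, smul_eq_mul, smul_eq_mul,
        show ((m:ℤ) - 1 - k) = ((m:ℤ) - 1) + (-(k:ℤ)) by ring, zpow_add₀ (hz0 θ),
        zpow_neg, zpow_natCast, ← inv_pow]
      ring
    have hval : deriv (circleMap 0 R) θ * z ^ ((m:ℤ) - 1) * φ (0 + z⁻¹) =
        deriv (circleMap 0 R) θ • (z ^ ((m:ℤ) - 1) * (1 - (x:ℂ) / z) ^ (-(lam:ℂ))) := by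
      rw [zero_add, smul_eq_mul, hφdef]
      rw [div_eq_mul_inv]
      ring
    rw [← hval]
    exact hs.congr_fun hfun
  have hsum_int : HasSum
      (fun k : ℕ => ∫ θ in (0:ℝ)..(2*Real.pi), deriv (circleMap 0 R) θ •
          ((circleMap 0 R θ) ^ ((m:ℤ) - 1 - k) * p.coeff k))
      (∮ z in C(0, R), z ^ ((m:ℤ) - 1) * (1 - (x:ℂ) / z) ^ (-(lam:ℂ))) := by
    rw [circleIntegral]
    apply intervalIntegral.hasSum_integral_of_dominated_convergence
      (bound := fun (k : ℕ) (_ : ℝ) =>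
        R ^ m * ((ascPochhammer ℝ k).eval lam / (Nat.factorial k) * (|x| / R) ^ k))
    · intro k
      apply Continuous.aestronglyMeasurable
      simp only [deriv_circleMap]
      exact ((continuous_circleMap 0 R).mul continuous_const).smul
        (((continuous_circleMap 0 R).zpow₀ _ (fun θ => Or.inl (hz0 θ))).mul continuous_const)
    · intro k
      apply Eventually.of_forall
      intro θ _
      have h1 : ‖(circleMap 0 R θ) ^ ((m:ℤ) - 1 - k)‖ = R ^ ((m:ℤ) - 1 - k) := by
        rw [norm_zpow, hzprop]
      have h2 : ‖(((ascPochhammer ℝ k).eval lam : ℝ) : ℂ) * (x:ℂ)^k / (Nat.factorial k)‖ =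
          (ascPochhammer ℝ k).eval lam * |x| ^ k / (Nat.factorial k) := by
        rw [norm_div, norm_mul, Complex.norm_natCast, ← Complex.ofReal_pow,
          Complex.norm_real, Complex.norm_real, Real.norm_eq_abs, Real.norm_eq_abs,
          abs_of_pos (ascPochhammer_pos k lam hlam), _root_.abs_pow]
      have hnorm : ‖deriv (circleMap 0 R) θ •
          ((circleMap 0 R θ) ^ ((m:ℤ) - 1 - k) * p.coeff k)‖ =
          R * (R ^ ((m:ℤ) - 1 - k) * ‖p.coeff k‖) := by
        rw [norm_smul, norm_mul, h1, deriv_circleMap, norm_mul, Complex.norm_I, mul_one, hzprop]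
      rw [hnorm, hcoeff k, h2]
      have h3 : (R:ℝ) ^ ((m:ℤ) - 1 - k) = R ^ m / (R * R ^ k) := by
        rw [show ((m:ℤ) - 1 - k) = (m:ℤ) - (1 + k) by ring, zpow_sub₀ hR0.ne',
          zpow_add₀ hR0.ne', zpow_natCast, zpow_natCast, zpow_one]
      rw [h3]
      have hfk : (0:ℝ) < Nat.factorial k := by positivity
      apply le_of_eq
      rw [div_pow]
      field_simp
    · apply Eventually.of_forall
      intro θ _
      apply Summable.mul_left
      apply aux_summable lam hlam (by positivity)
      rw [div_lt_one hR0]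
      exact hR
    · exact intervalIntegrable_const
    · exact Eventually.of_forall (fun θ _ => hlim θ)
  have heval : ∀ k : ℕ, (∫ θ in (0:ℝ)..(2*Real.pi), deriv (circleMap 0 R) θ •
        ((circleMap 0 R θ) ^ ((m:ℤ) - 1 - k) * p.coeff k)) =
      if k = m then (2 * Real.pi * Complex.I) * p.coeff m else 0 := by
    intro k
    have hI0 : (∫ θ in (0:ℝ)..(2*Real.pi), deriv (circleMap 0 R) θ •
        ((circleMap 0 R θ) ^ ((m:ℤ) - 1 - k) * p.coeff k)) =
        ∮ z in C(0, R), z ^ ((m:ℤ) - 1 - k) * p.coeff k := rfl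
    rw [hI0]
    have h4 : (∮ z in C(0, R), z ^ ((m:ℤ) - 1 - k) * p.coeff k) =
        (∮ z in C(0, R), z ^ ((m:ℤ) - 1 - k)) * p.coeff k := by
      simpa only [smul_eq_mul] using
        circleIntegral.integral_smul_const (fun z => z ^ ((m:ℤ) - 1 - k)) (p.coeff k) 0 R
    rw [h4]
    rcases eq_or_ne k m with hk | hk
    · subst hk
      have h5 : (∮ z in C(0, R), z ^ ((k:ℤ) - 1 - k)) = 2 * Real.pi * Complex.I := by
        have h6 : ∀ z : ℂ, z ^ ((k:ℤ) - 1 - k) = (z - 0)⁻¹ := by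
          intro z
          rw [sub_zero, show ((k:ℤ) - 1 - k) = -1 by ring, zpow_neg, zpow_one]
        simp only [h6]
        exact circleIntegral.integral_sub_inv_of_mem_ball (mem_ball_self hR0)
      rw [h5]
      simp
    · rw [if_neg hk]
      have h5 : (∮ z in C(0, R), z ^ ((m:ℤ) - 1 - k)) = 0 := by
        have h6 : (fun z : ℂ => z ^ ((m:ℤ) - 1 - k)) = fun z => (z - 0) ^ ((m:ℤ) - 1 - k) := by
          funext z; rw [sub_zero]
        rw [h6]
        apply circleIntegral.integral_sub_zpow_of_ne
        intro hcon
        apply hk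
        omega
      rw [h5, zero_mul]
  have h7 : HasSum (fun k : ℕ => if k = m then (2 * Real.pi * Complex.I) * p.coeff m else 0)
      ((2 * Real.pi * Complex.I) * p.coeff m) := by
    simpa using hasSum_ite_eq m ((2 * Real.pi * Complex.I) * p.coeff m)
  have h8 := (h7.congr_fun (fun k => heval k)).unique hsum_int
  rw [← h8, hcoeff m]

/-- The physicists' Hermite polynomial as a real function:
`H_n(x) = Σ_{k=0}^{⌊n/2⌋} (−1)^k (n!/(k!(n−2k)!)) (2x)^{n−2k}`. -/
noncomputable def physHermiteFun (n : ℕ) (x : ℝ) : ℝ :=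
  ∑ k ∈ Finset.range (n / 2 + 1),
    (-1 : ℝ) ^ k * (Nat.factorial n : ℝ) /
        ((Nat.factorial k : ℝ) * (Nat.factorial (n - 2 * k) : ℝ)) * (2 * x) ^ (n - 2 * k)

lemma aux_alg (n : ℕ) (lam x : ℝ) (hlam : 0 < lam) :
    physHermiteFun n x = (2^n * (Nat.factorial n) / (ascPochhammer ℝ n).eval lam) *
      ∑ s ∈ Finset.range (n/2+1),
        ((-1:ℝ)^s * (ascPochhammer ℝ (2*s)).eval ((n:ℝ) + lam - 2*s) /
          (4^s * (Nat.factorial s))) *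
        ((ascPochhammer ℝ (n-2*s)).eval lam * x^(n-2*s) / (Nat.factorial (n-2*s))) := by
  rw [physHermiteFun, Finset.mul_sum]
  apply Finset.sum_congr rfl
  intro s hs
  have h2s : 2*s ≤ n := by have := Finset.mem_range.mp hs; omega
  have hpt : lam + ((n - 2*s : ℕ) : ℝ) = (n:ℝ) + lam - 2*s := by
    push_cast [h2s]; ring
  have hE : (ascPochhammer ℝ n).eval lam =
      (ascPochhammer ℝ (n-2*s)).eval lam *
        (ascPochhammer ℝ (2*s)).eval ((n:ℝ) + lam - 2*s) := by
    have h := ascPochhammer_mul (S := ℝ) (n - 2*s) (2*s)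
    have hn : (n - 2*s) + 2*s = n := by omega
    rw [hn] at h
    have h2 := congrArg (Polynomial.eval lam) h.symm
    rw [Polynomial.eval_mul, Polynomial.eval_comp] at h2
    rw [h2]
    congr 1
    rw [Polynomial.eval_add, Polynomial.eval_X, Polynomial.eval_natCast, hpt]
  have hEpos : 0 < (ascPochhammer ℝ (n-2*s)).eval lam := ascPochhammer_pos _ lam hlam
  have hPpos : 0 < (ascPochhammer ℝ (2*s)).eval ((n:ℝ) + lam - 2*s) := by
    rw [← hpt]
    exact ascPochhammer_pos _ _ (by positivity)
  rw [hE]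
  have h4 : (2:ℝ)^n = 4^s * 2^(n-2*s) := by
    rw [show (4:ℝ) = 2^2 by norm_num, ← pow_mul, ← pow_add]
    congr 1
    omega
  rw [h4, mul_pow]
  have hfs : (0:ℝ) < Nat.factorial s := by positivity
  have hfm : (0:ℝ) < Nat.factorial (n-2*s) := by positivity
  field_simp

theorem stmt_18 (n : ℕ) (lam : ℝ) (hlam : 0 < lam) (x : ℝ) (R : ℝ) (hR : |x| < R) :
    (physHermiteFun n x : ℂ) =
      ((2 ^ n * (Nat.factorial n : ℝ) / (ascPochhammer ℝ n).eval lam : ℝ) : ℂ) *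
        ∑ s ∈ Finset.range (n / 2 + 1),
          (((-1 : ℝ) ^ s * (ascPochhammer ℝ (2 * s)).eval ((n : ℝ) + lam - 2 * s) /
              (4 ^ s * (Nat.factorial s : ℝ)) : ℝ) : ℂ) *
            ((2 * Real.pi * Complex.I)⁻¹ *
              ∮ z in C(0, R), z ^ ((n : ℤ) - 2 * s - 1) * (1 - (x : ℂ) / z) ^ (-(lam : ℂ))) := by
  have hR0 : 0 < R := (abs_nonneg x).trans_lt hR
  have hπ : (2 * (Real.pi:ℂ) * Complex.I) ≠ 0 := by
    simp [Real.pi_ne_zero, Complex.I_ne_zero]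
  have hterm : ∀ s ∈ Finset.range (n / 2 + 1),
      (((-1 : ℝ) ^ s * (ascPochhammer ℝ (2 * s)).eval ((n : ℝ) + lam - 2 * s) /
          (4 ^ s * (Nat.factorial s : ℝ)) : ℝ) : ℂ) *
        ((2 * Real.pi * Complex.I)⁻¹ *
          ∮ z in C(0, R), z ^ ((n : ℤ) - 2 * s - 1) * (1 - (x : ℂ) / z) ^ (-(lam : ℂ))) =
      ((((-1:ℝ)^s * (ascPochhammer ℝ (2*s)).eval ((n:ℝ) + lam - 2*s) /
          (4^s * (Nat.factorial s))) *
        ((ascPochhammer ℝ (n-2*s)).eval lam * x^(n-2*s) / (Nat.factorial (n-2*s))) : ℝ) : ℂ) := by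
    intro s hs
    have h2s : 2*s ≤ n := by have := Finset.mem_range.mp hs; omega
    have hm : ((n:ℤ) - 2*s - 1) = ((n - 2*s : ℕ) : ℤ) - 1 := by
      push_cast [h2s]; ring
    rw [hm, aux_circle x lam R hlam hR (n - 2*s), inv_mul_cancel_left₀ hπ]
    push_cast
    ring
  rw [Finset.sum_congr rfl hterm, ← Complex.ofReal_sum, ← Complex.ofReal_mul,
    ← aux_alg n lam x hlam]
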